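/- Let a, b, c > 0 and define ψ_{H³}(a,b,c) := ((a−b)²/(ab)² + (a−c)²/(ac)² + (b−c)²/(bc)²)·((a+b+c)³)². Then with w = ψ_{H³} and F(a,b,c) = (a+b+c)³, the constant term C_w(a,b,c) := a·w_a·(a²F_a + b²F_b + c²F_c + a(F − aF_a − bF_b − cF_c)) + b·w_b·(a²F_a + b²F_b + c²F_c + b(F − aF_a − bF_b − cF_c)) + c·w_c·(a²F_a + b²F_b + c²F_c + c(F − aF_a − bF_b − cF_c)) vanishes; that is, ψ_{H³} is a vanishing function for the normal velocity F = H³. -/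

import Mathlib

/-- `ψ_{H³}(a,b,c) = ((a−b)²/(ab)² + (a−c)²/(ac)² + (b−c)²/(bc)²)·((a+b+c)³)²`. -/
noncomputable def psiH3 (a b c : ℝ) : ℝ :=
  ((a - b) ^ 2 / (a * b) ^ 2 + (a - c) ^ 2 / (a * c) ^ 2 + (b - c) ^ 2 / (b * c) ^ 2) *
    ((a + b + c) ^ 3) ^ 2

/-- Partial derivative with respect to the first variable. -/
noncomputable def p1 (f : ℝ → ℝ → ℝ → ℝ) (a b c : ℝ) : ℝ := deriv (fun x => f x b c) a

/-- Partial derivative with respect to the second variable. -/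
noncomputable def p2 (f : ℝ → ℝ → ℝ → ℝ) (a b c : ℝ) : ℝ := deriv (fun y => f a y c) b

/-- Partial derivative with respect to the third variable. -/
noncomputable def p3 (f : ℝ → ℝ → ℝ → ℝ) (a b c : ℝ) : ℝ := deriv (fun z => f a b z) c

/-- The constant term `C_w` of the linear operator `L` for normal velocity `F`. -/
noncomputable def Cterm (w F : ℝ → ℝ → ℝ → ℝ) (a b c : ℝ) : ℝ :=
  a * p1 w a b c * (a ^ 2 * p1 F a b c + b ^ 2 * p2 F a b c + c ^ 2 * p3 F a b c
      + a * (F a b c - a * p1 F a b c - b * p2 F a b c - c * p3 F a b c))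
  + b * p2 w a b c * (a ^ 2 * p1 F a b c + b ^ 2 * p2 F a b c + c ^ 2 * p3 F a b c
      + b * (F a b c - a * p1 F a b c - b * p2 F a b c - c * p3 F a b c))
  + c * p3 w a b c * (a ^ 2 * p1 F a b c + b ^ 2 * p2 F a b c + c ^ 2 * p3 F a b c
      + c * (F a b c - a * p1 F a b c - b * p2 F a b c - c * p3 F a b c))

/-- The gradient term `E_w` of the linear operator `L` for normal velocity `F`. -/
noncomputable def Eterm (w F : ℝ → ℝ → ℝ → ℝ) (a b c : ℝ) : ℝ :=
  2 * ((p3 w a b c * (p1 F a b c - p2 F a b c)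
          - p3 F a b c * (p1 w a b c - p2 w a b c)) / (a - b)
     + (p2 w a b c * (p1 F a b c - p3 F a b c)
          - p2 F a b c * (p1 w a b c - p3 w a b c)) / (a - c)
     + (p1 w a b c * (p2 F a b c - p3 F a b c)
          - p1 F a b c * (p2 w a b c - p3 w a b c)) / (b - c))


/-- Auxiliary: closed form of the partial derivative of `psiH3` in its first slot. -/
noncomputable def psiD (a b c : ℝ) : ℝ :=
  (2 * (1/b - a⁻¹) * (a^2)⁻¹ + 2 * (1/c - a⁻¹) * (a^2)⁻¹) * ((a + b + c) ^ 3) ^ 2 +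
    ((1/b - a⁻¹) ^ 2 + (1/c - a⁻¹) ^ 2 + (1/c - 1/b) ^ 2) *
      (2 * (a + b + c) ^ 3 * (3 * (a + b + c) ^ 2))

lemma psiH3_symm12 (a b c : ℝ) : psiH3 a b c = psiH3 b a c := by
  unfold psiH3; ring

lemma psiH3_symm13 (a b c : ℝ) : psiH3 a b c = psiH3 c b a := by
  unfold psiH3; ring

lemma deriv_psi_first {a b c : ℝ} (ha : a ≠ 0) (hb : b ≠ 0) (hc : c ≠ 0) :
    deriv (fun x => psiH3 x b c) a = psiD a b c := by
  have hg : ∀ x : ℝ, x ≠ 0 →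
      psiH3 x b c = ((1/b - x⁻¹) ^ 2 + (1/c - x⁻¹) ^ 2 + (1/c - 1/b) ^ 2) *
        ((x + b + c) ^ 3) ^ 2 := by
    intro x hx
    unfold psiH3
    field_simp
  have hev : (fun x => psiH3 x b c) =ᶠ[nhds a]
      (fun x => ((1/b - x⁻¹) ^ 2 + (1/c - x⁻¹) ^ 2 + (1/c - 1/b) ^ 2) *
        ((x + b + c) ^ 3) ^ 2) := by
    filter_upwards [isOpen_ne.mem_nhds ha] with x hx using hg x hx
  rw [Filter.EventuallyEq.deriv_eq hev]
  have hinv : HasDerivAt (fun x : ℝ => x⁻¹) (-(a^2)⁻¹) a := hasDerivAt_inv ha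
  have h1 : HasDerivAt (fun x : ℝ => 1/b - x⁻¹) ((a^2)⁻¹) a := by
    simpa using hinv.const_sub (1/b)
  have h2 : HasDerivAt (fun x : ℝ => 1/c - x⁻¹) ((a^2)⁻¹) a := by
    simpa using hinv.const_sub (1/c)
  have hq : HasDerivAt (fun x : ℝ => (1/b - x⁻¹) ^ 2 + (1/c - x⁻¹) ^ 2 + (1/c - 1/b) ^ 2)
      (2 * (1/b - a⁻¹) * (a^2)⁻¹ + 2 * (1/c - a⁻¹) * (a^2)⁻¹) a := by
    have := ((h1.pow 2).add (h2.pow 2)).add_const ((1/c - 1/b) ^ 2)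
    simpa [mul_comm, mul_assoc, mul_left_comm] using this
  have hs : HasDerivAt (fun x : ℝ => ((x + b + c) ^ 3) ^ 2)
      (2 * (a + b + c) ^ 3 * (3 * (a + b + c) ^ 2)) a := by
    have h0 : HasDerivAt (fun x : ℝ => x + b + c) 1 a := by
      simpa using ((hasDerivAt_id a).add_const b).add_const c
    have h3 : HasDerivAt (fun x : ℝ => (x + b + c) ^ 3) (3 * (a + b + c) ^ 2) a := by
      simpa using h0.fun_pow 3
    simpa [mul_comm, mul_assoc, mul_left_comm] using h3.fun_pow 2
  have := hq.fun_mul hs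
  rw [this.deriv]
  unfold psiD
  ring

lemma p1_psi {a b c : ℝ} (ha : a ≠ 0) (hb : b ≠ 0) (hc : c ≠ 0) :
    p1 psiH3 a b c = psiD a b c := deriv_psi_first ha hb hc

lemma p2_psi {a b c : ℝ} (ha : a ≠ 0) (hb : b ≠ 0) (hc : c ≠ 0) :
    p2 psiH3 a b c = psiD b a c := by
  have : (fun y => psiH3 a y c) = (fun y => psiH3 y a c) := by
    funext y; exact psiH3_symm12 a y c
  rw [p2, this]
  exact deriv_psi_first hb ha hc

lemma p3_psi {a b c : ℝ} (ha : a ≠ 0) (hb : b ≠ 0) (hc : c ≠ 0) :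
    p3 psiH3 a b c = psiD c b a := by
  have : (fun z => psiH3 a b z) = (fun z => psiH3 z b a) := by
    funext z; exact psiH3_symm13 a b z
  rw [p3, this]
  exact deriv_psi_first hc hb ha

lemma p1_F (a b c : ℝ) :
    p1 (fun a b c => (a + b + c) ^ 3) a b c = 3 * (a + b + c) ^ 2 := by
  rw [p1]
  have h0 : HasDerivAt (fun x : ℝ => x + b + c) 1 a := by
    simpa using ((hasDerivAt_id a).add_const b).add_const c
  have := h0.fun_pow 3
  rw [this.deriv]; ring

lemma p2_F (a b c : ℝ) :
    p2 (fun a b c => (a + b + c) ^ 3) a b c = 3 * (a + b + c) ^ 2 := by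
  rw [p2]
  have h0 : HasDerivAt (fun y : ℝ => a + y + c) 1 b := by
    simpa using (((hasDerivAt_id b).const_add a).add_const c)
  have := h0.fun_pow 3
  rw [this.deriv]; ring

lemma p3_F (a b c : ℝ) :
    p3 (fun a b c => (a + b + c) ^ 3) a b c = 3 * (a + b + c) ^ 2 := by
  rw [p3]
  have h0 : HasDerivAt (fun z : ℝ => a + b + z) 1 c := by
    simpa using (hasDerivAt_id c).const_add (a + b)
  have := h0.fun_pow 3
  rw [this.deriv]; ring


/-- `ψ_{H³}` is a vanishing function for the normal velocity `F = H³ = (a+b+c)³`: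
the constant term of the linear operator `L` for `w = ψ_{H³}` vanishes on the
positive orthant. -/
theorem Cterm_psiH3_eq_zero (a b c : ℝ) (ha : 0 < a) (hb : 0 < b) (hc : 0 < c) :
    Cterm psiH3 (fun a b c => (a + b + c) ^ 3) a b c = 0 := by
  have ha' := ha.ne'
  have hb' := hb.ne'
  have hc' := hc.ne'
  rw [Cterm, p1_psi ha' hb' hc', p2_psi ha' hb' hc', p3_psi ha' hb' hc',
    p1_F, p2_F, p3_F]
  unfold psiD
  field_simp
  ring
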